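/- arXiv:2506.09318 — 2 statements merged into one kernel-verified Lean document; each statement's English description precedes it below -/
import Mathlib

section
/- Let d ∈ ℕ and let P, Q ∈ ℂ[x] with deg P ≤ d and deg Q ≤ d be polynomials satisfying |P(x)|² + |Q(x)|² = 1 for every x ∈ ℂ with |x| = 1. Then there exist θ, φ ∈ ℝ^{d+1} and λ ∈ ℝ such that for every N ≥ 1 and every N×N unitary matrix U, the top-left N×N block of (∏_{j=1}^{d} R(θ_j, φ_j, 0)·A) · R(θ_0, φ_0, λ) equals P(U) and the bottom-left N×N block equals Q(U), where A = |0⟩⟨0| ⊗ U + |1⟩⟨1| ⊗ I_N. -/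
/-
Each layer `R(θ, φ, 0) A` acts on the first block column `(P(U), Q(U))` of the circuit
as the polynomial map `(P, Q) ↦ (e^{iφ} (cos θ X P + sin θ Q), sin θ X P - cos θ Q)`, whose
coefficient matrix is unitary on the unit circle. Conversely, given a complementary pair of
degree `≤ d + 1`, the identity `|P|² + |Q|² = 1` on the circle forces the top coefficients to be
orthogonal to the constant ones, `P_{d+1} conj P_0 + Q_{d+1} conj Q_0 = 0`; this is exactly what is
needed to choose `θ, φ` so that the inverse layer produces a first component divisible by `X` and
a second component of degree `≤ d`. Peeling off layers lowers the degree down to constants,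
which are matched by a single `R(θ_0, φ_0, λ)`.
-/

open Matrix Kronecker

/-- The single-qubit rotation `R(θ,φ,λ)` tensored with the `N×N` identity:
`R(θ,φ,λ) = [[e^{i(λ+φ)}cos θ, e^{iφ} sin θ], [e^{iλ} sin θ, -cos θ]] ⊗ I_N`. -/
noncomputable def gqspR (N : ℕ) (θ φ lam : ℝ) : Matrix (Fin 2 × Fin N) (Fin 2 × Fin N) ℂ :=
  (!![Complex.exp (Complex.I * ((lam : ℂ) + (φ : ℂ))) * (Real.cos θ : ℂ),
      Complex.exp (Complex.I * (φ : ℂ)) * (Real.sin θ : ℂ);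
      Complex.exp (Complex.I * (lam : ℂ)) * (Real.sin θ : ℂ),
      -(Real.cos θ : ℂ)] : Matrix (Fin 2) (Fin 2) ℂ) ⊗ₖ (1 : Matrix (Fin N) (Fin N) ℂ)

/-- The anti-controlled evolution operator `A = |0⟩⟨0| ⊗ U + |1⟩⟨1| ⊗ I_N`. -/
noncomputable def gqspA (N : ℕ) (U : Matrix (Fin N) (Fin N) ℂ) :
    Matrix (Fin 2 × Fin N) (Fin 2 × Fin N) ℂ :=
  (!![1, 0; 0, 0] : Matrix (Fin 2) (Fin 2) ℂ) ⊗ₖ U +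
    (!![0, 0; 0, 1] : Matrix (Fin 2) (Fin 2) ℂ) ⊗ₖ (1 : Matrix (Fin N) (Fin N) ℂ)

/-- The interleaved GQSP circuit `(∏_{j=1}^d R(θ_j,φ_j,0) A) R(θ_0,φ_0,λ)`
(the factor with the largest index `j = d` acting first on the right of the
`j = 1, …, d` factors, and `R(θ_0,φ_0,λ)` acting first of all). -/
noncomputable def gqspCircuit (N d : ℕ) (U : Matrix (Fin N) (Fin N) ℂ)
    (θ φ : Fin (d + 1) → ℝ) (lam : ℝ) : Matrix (Fin 2 × Fin N) (Fin 2 × Fin N) ℂ :=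
  (List.ofFn fun j : Fin d => gqspR N (θ j.succ) (φ j.succ) 0 * gqspA N U).prod *
    gqspR N (θ 0) (φ 0) lam

/-- The top-left `N×N` block of a `2N×2N` block matrix. -/
def block00 (N : ℕ) (W : Matrix (Fin 2 × Fin N) (Fin 2 × Fin N) ℂ) :
    Matrix (Fin N) (Fin N) ℂ :=
  Matrix.of fun i j => W (0, i) (0, j)

/-- The bottom-left `N×N` block of a `2N×2N` block matrix. -/
def block10 (N : ℕ) (W : Matrix (Fin 2 × Fin N) (Fin 2 × Fin N) ℂ) :
    Matrix (Fin N) (Fin N) ℂ :=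
  Matrix.of fun i j => W (1, i) (0, j)

open Complex Polynomial ComplexConjugate

def IsComplementary (P Q : ℂ[X]) : Prop :=
  ∀ x : ℂ, ‖x‖ = 1 → ‖P.eval x‖ ^ 2 + ‖Q.eval x‖ ^ 2 = 1

lemma setOf_norm_eq_one_infinite : {x : ℂ | ‖x‖ = 1}.Infinite := by
  have hI : (Set.Ioc (-Real.pi) Real.pi).Infinite := Set.Ioc_infinite (by linarith [Real.pi_pos])
  refine ((hI.image Circle.invOn_arg_exp.1.injOn).image Subtype.val_injective.injOn).mono ?_
  rintro _ ⟨w, -, rfl⟩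
  exact mem_sphere_zero_iff_norm.mp w.2

lemma eval_reflect_map_conj {n : ℕ} {P : ℂ[X]} (hP : P.natDegree ≤ n) {x : ℂ} (hx : ‖x‖ = 1) :
    (reflect n (P.map (starRingEnd ℂ))).eval x = x ^ n * conj (P.eval x) := by
  have hx0 : x ≠ 0 := norm_ne_zero_iff.mp (by rw [hx]; exact one_ne_zero)
  let := invertibleOfNonzero (inv_ne_zero hx0)
  have h := eval₂_reflect_mul_pow (RingHom.id ℂ) x⁻¹ n (P.map (starRingEnd ℂ))
    (natDegree_map_le.trans hP)
  have hinv : x⁻¹ = conj x := by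
    rw [inv_def, normSq_eq_norm_sq, hx]; simp
  rw [invOf_eq_inv, inv_inv, ← eval, ← eval, eval_map, hinv, eval₂_at_apply] at h
  rw [← h, mul_left_comm, ← mul_pow, mul_conj', hx]
  simp

lemma IsComplementary.coeff_mul_conj_add {P Q : ℂ[X]} (h : IsComplementary P Q) {n : ℕ}
    (hn : n ≠ 0) (hP : P.natDegree ≤ n) (hQ : Q.natDegree ≤ n) :
    P.coeff n * conj (P.coeff 0) + Q.coeff n * conj (Q.coeff 0) = 0 := by
  -- `R F = X ^ n * F̄(1/X)`, so on the circle `P R P + Q R Q = X ^ n (|P|² + |Q|²) = X ^ n`;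
  -- its coefficient at `X ^ (2 n)` is the claim
  set R : ℂ[X] → ℂ[X] := fun F => reflect n (F.map (starRingEnd ℂ))
  have hR : ∀ F : ℂ[X], F.natDegree ≤ n → (R F).natDegree ≤ n := fun F hF =>
    natDegree_reflect_le.trans (max_le le_rfl (natDegree_map_le.trans hF))
  have hid : P * R P + Q * R Q = X ^ n := by
    refine eq_of_infinite_eval_eq _ _ (setOf_norm_eq_one_infinite.mono fun x (hx : ‖x‖ = 1) => ?_)
    show eval x _ = eval x _
    rw [eval_add, eval_mul, eval_mul, eval_reflect_map_conj hP hx, eval_reflect_map_conj hQ hx,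
      eval_pow, eval_X, mul_left_comm, mul_left_comm (eval x Q), ← mul_add, mul_conj', mul_conj',
      ← ofReal_pow, ← ofReal_pow, ← ofReal_add, h x hx, ofReal_one, mul_one]
  have hcoeff := congrArg (coeff · (n + n)) hid
  simp only [coeff_add, coeff_mul_add_eq_of_natDegree_le hP (hR P hP),
    coeff_mul_add_eq_of_natDegree_le hQ (hR Q hQ), coeff_X_pow] at hcoeff
  simpa [R, coeff_reflect, hn] using hcoeff

lemma mul_conj_eq_one {f : ℂ} (hf : ‖f‖ = 1) : f * conj f = 1 := by
  rw [mul_conj', hf]; simp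

lemma exists_cos_mul_eq_sin_mul (u v : ℝ) : ∃ t : ℝ, u * Real.cos t = v * Real.sin t := by
  by_cases hz : (⟨v, u⟩ : ℂ) = 0
  · obtain ⟨rfl, rfl⟩ : v = 0 ∧ u = 0 := by simpa [Complex.ext_iff] using hz
    exact ⟨0, by simp⟩
  · refine ⟨arg ⟨v, u⟩, mul_left_cancel₀ (norm_ne_zero_iff.mpr hz) ?_⟩
    linear_combination u * norm_mul_cos_arg ⟨v, u⟩ - v * norm_mul_sin_arg ⟨v, u⟩

lemma exists_exp_mul_cos_mul_eq_sin_mul (a b : ℂ) :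
    ∃ p t : ℝ, exp (I * p) * Real.cos t * a = Real.sin t * b := by
  obtain ⟨t, ht⟩ := exists_cos_mul_eq_sin_mul ‖a‖ ‖b‖
  refine ⟨arg b - arg a, t, ?_⟩
  have hphase : exp (I * ↑(arg b - arg a)) * exp (arg a * I) = exp (arg b * I) := by
    rw [← exp_add]; push_cast; ring_nf
  have hpolar := norm_mul_exp_arg_mul_I
  have htC : (‖a‖ : ℂ) * Real.cos t = ‖b‖ * Real.sin t := by exact_mod_cast ht
  linear_combination -(exp (I * ↑(arg b - arg a)) * Real.cos t) * hpolar a +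
    Real.cos t * ‖a‖ * hphase + exp (arg b * I) * htC +
    Real.sin t * hpolar b

lemma exists_angles_of_mul_conj_add_eq_zero {a₀ b₀ a₁ b₁ : ℂ}
    (h : a₁ * conj a₀ + b₁ * conj b₀ = 0) :
    ∃ p t : ℝ, exp (I * p) * Real.cos t * a₀ + Real.sin t * b₀ = 0 ∧
      exp (I * p) * Real.sin t * a₁ - Real.cos t * b₁ = 0 := by
  by_cases h₀ : a₀ = 0 ∧ b₀ = 0
  · obtain ⟨p, t, ht⟩ := exists_exp_mul_cos_mul_eq_sin_mul a₁ b₁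
    refine ⟨p, Real.pi / 2 - t, by simp [h₀.1, h₀.2], ?_⟩
    rw [Real.sin_pi_div_two_sub, Real.cos_pi_div_two_sub]
    linear_combination ht
  · obtain ⟨p, t, ht⟩ := exists_exp_mul_cos_mul_eq_sin_mul a₀ (-b₀)
    set e := exp (I * p)
    have ht' : e * Real.cos t * a₀ + Real.sin t * b₀ = 0 := by linear_combination ht
    refine ⟨p, t, ht', ?_⟩
    have he : e * conj e = 1 := mul_conj_eq_one (norm_exp_I_mul_ofReal p)
    have hconj := congrArg conj ht'
    simp only [map_add, map_mul, conj_ofReal, map_zero] at hconj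
    -- the second residual is annihilated by both `conj a₀` and `conj b₀`, and `(a₀, b₀) ≠ 0`
    have hs₀ : (e * Real.sin t * a₁ - Real.cos t * b₁) * conj a₀ = 0 := by
      linear_combination e * Real.sin t * h - b₁ * e * hconj + b₁ * Real.cos t * conj a₀ * he
    have hs₁ : (e * Real.sin t * a₁ - Real.cos t * b₁) * conj b₀ = 0 := by
      linear_combination -Real.cos t * h + a₁ * e * hconj - a₁ * Real.cos t * conj a₀ * he
    rcases not_and_or.mp h₀ with ha | hb
    · exact (mul_eq_zero.mp hs₀).resolve_right (by simpa using ha)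
    · exact (mul_eq_zero.mp hs₁).resolve_right (by simpa using hb)

lemma norm_sq_add_norm_sq_rotate {f : ℂ} (hf : ‖f‖ = 1) (t : ℝ) (a b : ℂ) :
    ‖f * Real.cos t * a + Real.sin t * b‖ ^ 2 + ‖f * Real.sin t * a - Real.cos t * b‖ ^ 2 =
      ‖a‖ ^ 2 + ‖b‖ ^ 2 := by
  apply ofReal_injective
  simp only [ofReal_add, ofReal_pow, ← mul_conj', map_add, map_sub, map_mul, conj_ofReal]
  have htrig : (Real.cos t : ℂ) ^ 2 + (Real.sin t : ℂ) ^ 2 = 1 := by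
    exact_mod_cast Real.cos_sq_add_sin_sq t
  linear_combination (a * conj a) * htrig + (b * conj b) * htrig +
    (Real.cos t ^ 2 + Real.sin t ^ 2 : ℂ) * a * conj a * mul_conj_eq_one hf

lemma IsComplementary.rotate {P Q : ℂ[X]} (h : IsComplementary P Q) {f : ℂ} (hf : ‖f‖ = 1)
    (t : ℝ) :
    IsComplementary (C (f * Real.cos t) * P + C (Real.sin t : ℂ) * Q)
      (C (f * Real.sin t) * P - C (Real.cos t : ℂ) * Q) := by
  intro x hx
  simp only [eval_add, eval_sub, eval_mul, eval_C]
  rw [norm_sq_add_norm_sq_rotate hf, h x hx]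

lemma IsComplementary.of_X_mul_left {P Q : ℂ[X]} (h : IsComplementary (X * P) Q) :
    IsComplementary P Q := by
  intro x hx
  simpa [hx] using h x hx

lemma IsComplementary.exists_peel {P Q : ℂ[X]} (h : IsComplementary P Q) {d : ℕ}
    (hP : P.natDegree ≤ d + 1) (hQ : Q.natDegree ≤ d + 1) :
    ∃ (t φ : ℝ) (P' Q' : ℂ[X]), P'.natDegree ≤ d ∧ Q'.natDegree ≤ d ∧ IsComplementary P' Q' ∧
      P = C (exp (I * φ) * Real.cos t) * (X * P') + C (exp (I * φ) * Real.sin t) * Q' ∧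
      Q = C (Real.sin t : ℂ) * (X * P') - C (Real.cos t : ℂ) * Q' := by
  obtain ⟨p, t, h₀, h₁⟩ :=
    exists_angles_of_mul_conj_add_eq_zero (h.coeff_mul_conj_add d.succ_ne_zero hP hQ)
  set L := C (exp (I * p) * Real.cos t) * P + C (Real.sin t : ℂ) * Q
  set Q' := C (exp (I * p) * Real.sin t) * P - C (Real.cos t : ℂ) * Q
  have hL0 : L.coeff 0 = 0 := by
    simp only [L, coeff_add, coeff_C_mul]; exact h₀
  have hXL : X * L.divX = L := by simpa [hL0] using X_mul_divX_add L
  have hrot : IsComplementary L Q' := h.rotate (norm_exp_I_mul_ofReal p) t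
  rw [← hXL] at hrot
  have hL : L.natDegree ≤ d + 1 :=
    natDegree_add_le_of_degree_le ((natDegree_C_mul_le _ _).trans hP)
      ((natDegree_C_mul_le _ _).trans hQ)
  have hQ' : Q'.natDegree ≤ d + 1 :=
    (natDegree_sub_le _ _).trans (max_le ((natDegree_C_mul_le _ _).trans hP)
      ((natDegree_C_mul_le _ _).trans hQ))
  have hphase : exp (I * ↑(-p)) * exp (I * p) = 1 := by
    rw [← exp_add]; push_cast; ring_nf; exact exp_zero
  have htrig : (Real.cos t : ℂ) ^ 2 + (Real.sin t : ℂ) ^ 2 = 1 := by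
    exact_mod_cast Real.cos_sq_add_sin_sq t
  refine ⟨t, -p, L.divX, Q', ?_, natDegree_le_pred hQ' ?_, hrot.of_X_mul_left, ?_, ?_⟩
  · rw [natDegree_divX_eq_natDegree_tsub_one]; omega
  · simp only [Q', coeff_sub, coeff_C_mul]; exact h₁
  · rw [hXL]; ext n
    simp only [L, Q', coeff_add, coeff_sub, coeff_C_mul]
    linear_combination (-(Real.cos t ^ 2 + Real.sin t ^ 2) * P.coeff n : ℂ) * hphase -
      P.coeff n * htrig
  · rw [hXL]; ext n
    simp only [L, Q', coeff_add, coeff_sub, coeff_C_mul]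
    linear_combination -Q.coeff n * htrig

lemma exists_angles_of_norm_sq_add_norm_sq_eq_one {p q : ℂ} (h : ‖p‖ ^ 2 + ‖q‖ ^ 2 = 1) :
    ∃ θ φ lam : ℝ, exp (I * (lam + φ)) * Real.cos θ = p ∧ exp (I * lam) * Real.sin θ = q := by
  have hp : ‖p‖ ≤ 1 := by nlinarith [norm_nonneg p, norm_nonneg q]
  have hcos : Real.cos (Real.arccos ‖p‖) = ‖p‖ :=
    Real.cos_arccos (by linarith [norm_nonneg p]) hp
  have hsin : Real.sin (Real.arccos ‖p‖) = ‖q‖ := by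
    rw [Real.sin_arccos, show 1 - ‖p‖ ^ 2 = ‖q‖ ^ 2 by linarith, Real.sqrt_sq (norm_nonneg q)]
  refine ⟨Real.arccos ‖p‖, arg p - arg q, arg q, ?_, ?_⟩
  · rw [hcos, show ((arg q : ℝ) : ℂ) + ((arg p - arg q : ℝ) : ℂ) = arg p by push_cast; ring,
      mul_comm, mul_comm I]
    exact norm_mul_exp_arg_mul_I p
  · rw [hsin, mul_comm, mul_comm I]
    exact norm_mul_exp_arg_mul_I q

lemma gqspCircuit_zero (N : ℕ) (U : Matrix (Fin N) (Fin N) ℂ) (θ φ : Fin 1 → ℝ) (lam : ℝ) :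
    gqspCircuit N 0 U θ φ lam = gqspR N (θ 0) (φ 0) lam := by
  simp [gqspCircuit]

lemma gqspCircuit_succ (N d : ℕ) (U : Matrix (Fin N) (Fin N) ℂ) (θ φ : Fin (d + 2) → ℝ)
    (lam : ℝ) :
    gqspCircuit N (d + 1) U θ φ lam = gqspR N (θ 1) (φ 1) 0 * gqspA N U *
      gqspCircuit N d U (θ ∘ Fin.succAbove 1) (φ ∘ Fin.succAbove 1) lam := by
  simp only [gqspCircuit, List.ofFn_succ, List.prod_cons, Function.comp_apply,
    ← Fin.succ_zero_eq_one, Fin.succ_succAbove_succ, Fin.succ_succAbove_zero, Fin.succAbove_zero,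
    mul_assoc]

lemma block00_gqspR (N : ℕ) (θ φ lam : ℝ) :
    block00 N (gqspR N θ φ lam) = (exp (I * (lam + φ)) * Real.cos θ) • 1 := by
  ext i j
  simp [block00, gqspR, Matrix.one_apply]

lemma block10_gqspR (N : ℕ) (θ φ lam : ℝ) :
    block10 N (gqspR N θ φ lam) = (exp (I * lam) * Real.sin θ) • 1 := by
  ext i j
  simp [block10, gqspR, Matrix.one_apply]

lemma block00_gqspR_mul_gqspA_mul (N : ℕ) (θ φ : ℝ) (U : Matrix (Fin N) (Fin N) ℂ)
    (W : Matrix (Fin 2 × Fin N) (Fin 2 × Fin N) ℂ) :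
    block00 N (gqspR N θ φ 0 * gqspA N U * W) =
      (exp (I * φ) * Real.cos θ) • (U * block00 N W) +
        (exp (I * φ) * Real.sin θ) • block10 N W := by
  ext i j
  simp [block00, block10, gqspR, gqspA, Matrix.mul_apply, Fintype.sum_prod_type, Matrix.one_apply,
    Finset.mul_sum, mul_assoc]

lemma block10_gqspR_mul_gqspA_mul (N : ℕ) (θ φ : ℝ) (U : Matrix (Fin N) (Fin N) ℂ)
    (W : Matrix (Fin 2 × Fin N) (Fin 2 × Fin N) ℂ) :
    block10 N (gqspR N θ φ 0 * gqspA N U * W) =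
      (Real.sin θ : ℂ) • (U * block00 N W) - (Real.cos θ : ℂ) • block10 N W := by
  ext i j
  simp [block00, block10, gqspR, gqspA, Matrix.mul_apply, Fintype.sum_prod_type, Matrix.one_apply,
    Finset.mul_sum, mul_assoc]
  ring

theorem exists_gqsp_angles {d : ℕ} {P Q : ℂ[X]} (h : IsComplementary P Q)
    (hP : P.natDegree ≤ d) (hQ : Q.natDegree ≤ d) :
    ∃ (θ φ : Fin (d + 1) → ℝ) (lam : ℝ), ∀ (N : ℕ) (U : Matrix (Fin N) (Fin N) ℂ),
      block00 N (gqspCircuit N d U θ φ lam) = aeval U P ∧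
        block10 N (gqspCircuit N d U θ φ lam) = aeval U Q := by
  induction d generalizing P Q with
  | zero =>
    rw [eq_C_of_natDegree_eq_zero (Nat.le_zero.mp hP),
      eq_C_of_natDegree_eq_zero (Nat.le_zero.mp hQ)] at h ⊢
    obtain ⟨θ, φ, lam, hp, hq⟩ :=
      exists_angles_of_norm_sq_add_norm_sq_eq_one (by simpa using h 1 (by simp))
    refine ⟨fun _ => θ, fun _ => φ, lam, fun N U => ?_⟩
    simp only [gqspCircuit_zero, block00_gqspR, block10_gqspR, hp, hq, aeval_C,
      Algebra.algebraMap_eq_smul_one, and_self]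
  | succ d ih =>
    obtain ⟨t, φ₁, P', Q', hP', hQ', h', rfl, rfl⟩ := h.exists_peel hP hQ
    obtain ⟨θ, φ, lam, hθφ⟩ := ih h' hP' hQ'
    refine ⟨Fin.insertNth 1 t θ, Fin.insertNth 1 φ₁ φ, lam, fun N U => ?_⟩
    simp only [← smul_eq_C_mul]
    simp only [gqspCircuit_succ, Fin.insertNth_apply_same, Fin.insertNth_comp_succAbove,
      block00_gqspR_mul_gqspA_mul, block10_gqspR_mul_gqspA_mul, (hθφ N U).1, (hθφ N U).2,
      map_add, map_sub, map_smul, map_mul, aeval_X, and_self]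

/-- Generalized Quantum Signal Processing, converse direction (Theorem 3): for any
polynomials `P, Q` of degree at most `d` with `|P(x)|² + |Q(x)|² = 1` on the unit
circle, there are angles `θ, φ ∈ ℝ^{d+1}`, `λ ∈ ℝ` such that for every unitary `U`
the GQSP circuit has top-left block `P(U)` and bottom-left block `Q(U)`. -/
theorem stmt_12 (d : ℕ) (P Q : Polynomial ℂ) (hPd : P.natDegree ≤ d) (hQd : Q.natDegree ≤ d)
    (hPQ : ∀ x : ℂ, ‖x‖ = 1 →
      ‖P.eval x‖ ^ 2 + ‖Q.eval x‖ ^ 2 = 1) :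
    ∃ (θ φ : Fin (d + 1) → ℝ) (lam : ℝ),
      ∀ N : ℕ, 1 ≤ N → ∀ U ∈ Matrix.unitaryGroup (Fin N) ℂ,
        block00 N (gqspCircuit N d U θ φ lam) = Polynomial.aeval U P ∧
        block10 N (gqspCircuit N d U θ φ lam) = Polynomial.aeval U Q := by
  obtain ⟨θ, φ, lam, h⟩ := exists_gqsp_angles hPQ hPd hQd
  exact ⟨θ, φ, lam, fun N _ U _ => h N U⟩
end

section
/- Let N ≥ 1, let H be an N×N Hermitian complex matrix with eigenvalues E_1,…,E_N, let L be an N×N complex matrix, and let β ≥ 0. Then |Tr(exp(−β(H + L)))| ≤ Σ_{λ=1}^{N} e^{−βE_λ} · e^{β‖L‖}, where ‖L‖ is the operator norm; equivalently, |Tr(exp(−β(H + L)))|/N ≤ e^{β‖L‖} · (Σ_λ e^{−βE_λ})/N = e^{β‖L‖}·Tr(exp(−βH))/N. -/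
/-!
Schur triangulation gives a unitary `U` with `T = U⋆(-β(H + L))U` upper triangular, so
`Tr exp(-β(H + L)) = Tr exp T = ∑ᵢ exp(Tᵢᵢ)`. Each `Tᵢᵢ` is `-β` times a diagonal entry of
`U⋆HU` plus one of `U⋆LU`, and the latter is at most `‖L‖` in modulus, so
`|Tr exp(-β(H + L))| ≤ e^{β‖L‖} ∑ᵢ exp(-β (U⋆HU)ᵢᵢ)`. Finally, writing `H = VDV⋆`, the
diagonal of `U⋆HU` is the image of the spectrum under the doubly stochastic matrix
`|(V⋆U)ⱼᵢ|²`, and Jensen's inequality for the convex function `x ↦ e^{-βx}` bounds the last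
sum by `∑ⱼ e^{-βEⱼ}`.
-/

open scoped InnerProductSpace Matrix.Norms.L2Operator
open Finset Matrix Module

section SchurTriangulation

variable {𝕜 E : Type*} [RCLike 𝕜] [NormedAddCommGroup E] [InnerProductSpace 𝕜 E]

theorem Orthonormal.snoc {n : ℕ} {v : Fin n → E} (hv : Orthonormal 𝕜 v) {w : E} (hw : ‖w‖ = 1)
    (hvw : ∀ i, ⟪v i, w⟫_𝕜 = 0) : Orthonormal 𝕜 (Fin.snoc v w : Fin (n + 1) → E) := by
  rw [orthonormal_iff_ite] at hv ⊢
  intro i j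
  induction i using Fin.lastCases <;> induction j using Fin.lastCases <;>
    simp [hv, hw, hvw, inner_eq_zero_symm.mp (hvw _), Fin.castSucc_ne_last,
      (Fin.castSucc_ne_last _).symm]

/-- A unit eigenvector of the adjoint spans a line whose orthogonal complement is invariant. -/
theorem LinearMap.exists_norm_eq_one_orthogonal_span_invariant [IsAlgClosed 𝕜]
    [FiniteDimensional 𝕜 E] [Nontrivial E] (f : E →ₗ[𝕜] E) :
    ∃ w : E, ‖w‖ = 1 ∧ ∀ x ∈ (𝕜 ∙ w)ᗮ, f x ∈ (𝕜 ∙ w)ᗮ := by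
  obtain ⟨μ, hμ⟩ := Module.End.exists_eigenvalue (LinearMap.adjoint f)
  obtain ⟨v, hv⟩ := hμ.exists_hasEigenvector
  refine ⟨(‖v‖⁻¹ : 𝕜) • v, norm_smul_inv_norm hv.2, fun x hx => ?_⟩
  rw [Submodule.mem_orthogonal_singleton_iff_inner_right] at hx ⊢
  rw [← LinearMap.adjoint_inner_left, map_smul, hv.apply_eq_smul, smul_comm, inner_smul_left, hx,
    mul_zero]

theorem LinearMap.exists_orthonormal_inner_map_eq_zero_of_lt [IsAlgClosed 𝕜] {n : ℕ}
    (hE : finrank 𝕜 E = n) (f : E →ₗ[𝕜] E) :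
    ∃ u : Fin n → E, Orthonormal 𝕜 u ∧ ∀ i j, j < i → ⟪u i, f (u j)⟫_𝕜 = 0 := by
  induction n generalizing E with
  | zero => exact ⟨finZeroElim, ⟨finZeroElim, finZeroElim⟩, finZeroElim⟩
  | succ n ih =>
    have : FiniteDimensional 𝕜 E := .of_finrank_eq_succ hE
    have : Nontrivial E := Module.nontrivial_of_finrank_eq_succ hE
    obtain ⟨w, hw, hinv⟩ := f.exists_norm_eq_one_orthogonal_span_invariant
    have hK : finrank 𝕜 (𝕜 ∙ w)ᗮ = n := by
      have := Submodule.finrank_add_finrank_orthogonal (𝕜 ∙ w)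
      rw [finrank_span_singleton (norm_ne_zero_iff.mp (hw ▸ one_ne_zero))] at this
      omega
    obtain ⟨u, hu, htri⟩ := ih hK (f.restrict hinv)
    have hperp : ∀ x : (𝕜 ∙ w)ᗮ, ⟪w, (x : E)⟫_𝕜 = 0 := fun x =>
      Submodule.mem_orthogonal_singleton_iff_inner_right.mp x.2
    refine ⟨Fin.snoc (fun i => (u i : E)) w,
      (hu.comp_linearIsometry (𝕜 ∙ w)ᗮ.subtypeₗᵢ).snoc hw fun i => inner_eq_zero_symm.mp (hperp _),
      fun i j hji => ?_⟩
    induction j using Fin.lastCases with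
    | last => exact absurd hji (Fin.le_last i).not_gt
    | cast j =>
      induction i using Fin.lastCases with
      | last => simpa using hperp (f.restrict hinv (u j))
      | cast i => simpa using htri i j (Fin.castSucc_lt_castSucc_iff.mp hji)

theorem Matrix.exists_mem_unitaryGroup_isUpperTriangular [IsAlgClosed 𝕜] {n : ℕ}
    (A : Matrix (Fin n) (Fin n) 𝕜) :
    ∃ U ∈ unitaryGroup (Fin n) 𝕜, (star U * A * U).IsUpperTriangular := by
  obtain ⟨u, hu, htri⟩ :=
    (toEuclideanLin A).exists_orthonormal_inner_map_eq_zero_of_lt finrank_euclideanSpace_fin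
  set U : Matrix (Fin n) (Fin n) 𝕜 := of fun i j => u j i
  have hentry : ∀ (B : Matrix (Fin n) (Fin n) 𝕜) i j,
      (star U * B * U) i j = ⟪u i, toEuclideanLin B (u j)⟫_𝕜 := by
    intro B i j
    simp only [U, mul_apply, star_apply, of_apply, sum_mul, EuclideanSpace.inner_eq_star_dotProduct,
      ofLp_toLpLin, toLin'_apply, mulVec, dotProduct, Pi.star_apply]
    rw [sum_comm]
    exact sum_congr rfl fun _ _ => sum_congr rfl fun _ _ => by ring
  refine ⟨U, mem_unitaryGroup_iff'.mpr ?_, fun i j hji => (hentry A i j).trans (htri i j hji)⟩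
  ext i j
  calc (star U * U) i j = (star U * (1 : Matrix (Fin n) (Fin n) 𝕜) * U) i j := by
        rw [Matrix.mul_one]
    _ = ⟪u i, u j⟫_𝕜 := by rw [hentry, toLpLin_one, LinearMap.id_apply]
    _ = (1 : Matrix (Fin n) (Fin n) 𝕜) i j := by rw [orthonormal_iff_ite.mp hu, one_apply]

end SchurTriangulation

namespace Matrix

variable {n : Type*} [Fintype n]

section Triangular

variable [LinearOrder n]

theorem IsUpperTriangular.diag_mul {R : Type*} [NonUnitalNonAssocSemiring R]
    {M N : Matrix n n R} (hM : M.IsUpperTriangular) (hN : N.IsUpperTriangular) :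
    (M * N).diag = M.diag * N.diag := by
  ext i
  simp only [diag_apply, mul_apply, Pi.mul_apply]
  refine sum_eq_single i (fun k _ hki => ?_) (by simp)
  rcases hki.lt_or_gt with hki | hik
  · rw [hM hki, zero_mul]
  · rw [hN hik, mul_zero]

theorem IsUpperTriangular.diag_pow {R : Type*} [Semiring R] [DecidableEq n]
    {M : Matrix n n R} (hM : M.IsUpperTriangular) (k : ℕ) : (M ^ k).diag = M.diag ^ k := by
  induction k with
  | zero => ext; simp
  | succ k ih => rw [pow_succ, IsUpperTriangular.diag_mul (hM.pow k) hM, ih, pow_succ]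

theorem IsUpperTriangular.diag_exp {𝕜 : Type*} [RCLike 𝕜] [DecidableEq n]
    {T : Matrix n n 𝕜} (hT : T.IsUpperTriangular) :
    (NormedSpace.exp T).diag = NormedSpace.exp T.diag := by
  have h := (NormedSpace.exp_series_hasSum_exp' (𝕂 := 𝕜) T).matrix_diag
  simp only [diag_smul, hT.diag_pow] at h
  exact h.unique (NormedSpace.exp_series_hasSum_exp' T.diag)

theorem trace_exp_of_isUpperTriangular [DecidableEq n] {T : Matrix n n ℂ}
    (hT : T.IsUpperTriangular) :
    trace (NormedSpace.exp T) = ∑ i, Complex.exp (T i i) := by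
  rw [trace, hT.diag_exp]
  simp only [Pi.coe_exp, diag_apply, Complex.exp_eq_exp_ℂ]

end Triangular

variable [DecidableEq n] {𝕜 : Type*} [RCLike 𝕜]

theorem trace_exp_unitary_conj {U : Matrix n n 𝕜} (hU : U ∈ unitaryGroup n 𝕜)
    (A : Matrix n n 𝕜) :
    trace (NormedSpace.exp (star U * A * U)) = trace (NormedSpace.exp A) := by
  have hconj : NormedSpace.exp (star U * A * U) = star U * NormedSpace.exp A * U := by
    simpa using exp_units_conj' (Unitary.toUnits ⟨U, hU⟩) A
  rw [hconj, trace_mul_cycle, mem_unitaryGroup_iff.mp hU, Matrix.one_mul]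

theorem norm_entry_le_l2_opNorm {m : Type*} [Fintype m] [DecidableEq m] (A : Matrix m n 𝕜)
    (i : m) (j : n) : ‖A i j‖ ≤ ‖A‖ :=
  calc ‖A i j‖ = ‖(EuclideanSpace.equiv m 𝕜).symm (A *ᵥ EuclideanSpace.single j 1) i‖ := by simp
    _ ≤ ‖(EuclideanSpace.equiv m 𝕜).symm (A *ᵥ EuclideanSpace.single j 1)‖ := PiLp.norm_apply_le _ _
    _ ≤ ‖A‖ := by simpa using l2_opNorm_mulVec A (EuclideanSpace.single j 1)

theorem l2_opNorm_unitary_conj {U : Matrix n n 𝕜} (hU : U ∈ unitaryGroup n 𝕜)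
    (A : Matrix n n 𝕜) : ‖star U * A * U‖ = ‖A‖ := by
  rw [CStarRing.norm_mul_mem_unitary _ hU, CStarRing.norm_mem_unitary_mul _ (Unitary.star_mem hU)]

end Matrix

theorem ConvexOn.sum_comp_vecMul_le_of_mem_doublyStochastic {n : Type*} [Fintype n]
    [DecidableEq n] {P : Matrix n n ℝ} (hP : P ∈ doublyStochastic ℝ n) {s : Set ℝ}
    {f : ℝ → ℝ} (hf : ConvexOn ℝ s f) {x : n → ℝ} (hx : ∀ j, x j ∈ s) :
    ∑ i, f ((x ᵥ* P) i) ≤ ∑ j, f (x j) := by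
  obtain ⟨hnonneg, hrow, hcol⟩ := mem_doublyStochastic_iff_sum.mp hP
  calc ∑ i, f ((x ᵥ* P) i) = ∑ i, f (∑ j, P j i • x j) := by
        simp only [vecMul, dotProduct, smul_eq_mul, mul_comm]
    _ ≤ ∑ i, ∑ j, P j i * f (x j) :=
        sum_le_sum fun i _ => hf.map_sum_le (fun j _ => hnonneg j i) (hcol i) fun j _ => hx j
    _ = ∑ j, f (x j) := by
        rw [sum_comm]
        simp only [← sum_mul, hrow, one_mul]

namespace Matrix

variable {n : Type*} [Fintype n] [DecidableEq n] {𝕜 : Type*} [RCLike 𝕜]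

theorem norm_sq_mem_doublyStochastic {U : Matrix n n 𝕜} (hU : U ∈ unitaryGroup n 𝕜) :
    (of fun i j => ‖U i j‖ ^ 2) ∈ doublyStochastic ℝ n := by
  rw [mem_doublyStochastic_iff_sum]
  refine ⟨fun i j => sq_nonneg _, fun i => ?_, fun j => ?_⟩
  · have h := congr_fun₂ (mem_unitaryGroup_iff.mp hU) i i
    simp only [mul_apply, star_apply, RCLike.star_def, RCLike.mul_conj, one_apply_eq] at h
    exact_mod_cast h
  · have h := congr_fun₂ (mem_unitaryGroup_iff'.mp hU) j j
    simp only [mul_apply, star_apply, RCLike.star_def, RCLike.conj_mul, one_apply_eq] at h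
    exact_mod_cast h

theorem diag_star_mul_diagonal_mul (W : Matrix n n 𝕜) (x : n → ℝ) (i : n) :
    (star W * diagonal (fun j => (x j : 𝕜)) * W) i i =
      ((x ᵥ* of fun i j => ‖W i j‖ ^ 2) i : ℝ) := by
  rw [mul_apply]
  simp only [mul_diagonal, star_apply, RCLike.star_def, vecMul, dotProduct, of_apply]
  push_cast
  refine sum_congr rfl fun j _ => ?_
  rw [← RCLike.conj_mul]
  ring

theorem IsHermitian.sum_convexOn_diag_unitary_conj_le {H U : Matrix n n 𝕜} (hH : H.IsHermitian)
    (hU : U ∈ unitaryGroup n 𝕜) {s : Set ℝ} {f : ℝ → ℝ} (hf : ConvexOn ℝ s f)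
    (hs : ∀ j, hH.eigenvalues j ∈ s) :
    ∑ i, f (RCLike.re ((star U * H * U) i i)) ≤ ∑ j, f (hH.eigenvalues j) := by
  set V : Matrix n n 𝕜 := ↑hH.eigenvectorUnitary
  set W := star V * U
  have hW : W ∈ unitaryGroup n 𝕜 := mul_mem (Unitary.star_mem hH.eigenvectorUnitary.2) hU
  have hconj : star U * H * U = star W * diagonal (fun j => (hH.eigenvalues j : 𝕜)) * W := by
    have hVV : V * star V = 1 := Unitary.mul_star_self_of_mem hH.eigenvectorUnitary.2
    have hD := hH.conjStarAlgAut_star_eigenvectorUnitary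
    rw [Unitary.conjStarAlgAut_star_apply] at hD
    simp only [W, ← Function.comp_def, ← hD, star_mul, star_star]
    calc star U * H * U = star U * (V * star V) * H * (V * star V) * U := by simp [hVV]
      _ = _ := by simp only [mul_assoc, V]
  simp only [hconj, diag_star_mul_diagonal_mul, RCLike.ofReal_re]
  exact hf.sum_comp_vecMul_le_of_mem_doublyStochastic (norm_sq_mem_doublyStochastic hW) hs

theorem re_diag_unitary_conj_neg_smul_add_le {U : Matrix n n ℂ} (hU : U ∈ unitaryGroup n ℂ)
    (H L : Matrix n n ℂ) {β : ℝ} (hβ : 0 ≤ β) (i : n) :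
    ((star U * ((-(β : ℂ)) • (H + L)) * U) i i).re ≤
      -β * ((star U * H * U) i i).re + β * ‖L‖ := by
  have hL : -((star U * L * U) i i).re ≤ ‖L‖ :=
    (neg_le_abs _).trans <| (Complex.abs_re_le_norm _).trans <|
      (norm_entry_le_l2_opNorm _ i i).trans_eq (l2_opNorm_unitary_conj hU L)
  have hre : ((star U * ((-(β : ℂ)) • (H + L)) * U) i i).re =
      -β * ((star U * H * U) i i).re - β * ((star U * L * U) i i).re := by
    simp only [Matrix.mul_smul, Matrix.smul_mul, Matrix.mul_add, Matrix.add_mul, smul_apply,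
      add_apply, smul_eq_mul, Complex.mul_re, Complex.add_re, Complex.neg_re, Complex.neg_im,
      Complex.ofReal_re, Complex.ofReal_im]
    ring
  rw [hre]
  nlinarith

end Matrix

open Finset in
theorem stmt_18_general (N : ℕ) (H L : Matrix (Fin N) (Fin N) ℂ)
    (hH : H.IsHermitian) (β : ℝ) (hβ : 0 ≤ β) :
    ‖Matrix.trace (NormedSpace.exp ((-(β : ℂ)) • (H + L)))‖ ≤
      (∑ lam : Fin N, Real.exp (-β * hH.eigenvalues lam)) * Real.exp (β * ‖L‖) := by
  obtain ⟨U, hU, hT⟩ := ((-(β : ℂ)) • (H + L)).exists_mem_unitaryGroup_isUpperTriangular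
  have hconvex : ConvexOn ℝ Set.univ fun x : ℝ => Real.exp (-β * x) := by
    simpa [Function.comp_def] using convexOn_exp.comp_linearMap (LinearMap.lsmul ℝ ℝ (-β))
  have hdiag : ∀ i, ‖Complex.exp ((star U * ((-(β : ℂ)) • (H + L)) * U) i i)‖ ≤
      Real.exp (-β * ((star U * H * U) i i).re) * Real.exp (β * ‖L‖) := fun i => by
    rw [Complex.norm_exp, ← Real.exp_add, Real.exp_le_exp]
    exact re_diag_unitary_conj_neg_smul_add_le hU H L hβ i
  calc ‖trace (NormedSpace.exp ((-(β : ℂ)) • (H + L)))‖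
      = ‖∑ i, Complex.exp ((star U * ((-(β : ℂ)) • (H + L)) * U) i i)‖ := by
        rw [← trace_exp_unitary_conj hU, trace_exp_of_isUpperTriangular hT]
    _ ≤ ∑ i, Real.exp (-β * ((star U * H * U) i i).re) * Real.exp (β * ‖L‖) :=
        (norm_sum_le _ _).trans (sum_le_sum fun i _ => hdiag i)
    _ = (∑ i, Real.exp (-β * ((star U * H * U) i i).re)) * Real.exp (β * ‖L‖) :=
        (sum_mul ..).symm
    _ ≤ _ := mul_le_mul_of_nonneg_right
        (hH.sum_convexOn_diag_unitary_conj_le hU hconvex fun _ => trivial) (Real.exp_nonneg _)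

open Finset in
/-- Eigenvalue form of the perturbed-trace bound: for `H` Hermitian with eigenvalues
`E_λ`, `L` arbitrary and `β ≥ 0`,
`|Tr(exp(-β(H+L)))| ≤ (∑_λ e^{-β E_λ}) e^{β‖L‖} = e^{β‖L‖} Tr(exp(-βH))`. -/
theorem stmt_18 (N : ℕ) (hN : 1 ≤ N) (H L : Matrix (Fin N) (Fin N) ℂ)
    (hH : H.IsHermitian) (β : ℝ) (hβ : 0 ≤ β) :
    ‖Matrix.trace (NormedSpace.exp ((-(β : ℂ)) • (H + L)))‖ ≤
      (∑ lam : Fin N, Real.exp (-β * hH.eigenvalues lam)) * Real.exp (β * ‖L‖) :=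
  stmt_18_general N H L hH β hβ
end
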